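/- For every λ > 0: (i) for each x ∈ X, R_λ(x,x) = (1 − 1/ν) Σ_{s=0}^∞ 1/((λ + p^s) ν^s) (independent of x); (ii) for x₀ ≠ x with r = d_h(x₀,x) ≥ 1, R_λ(x₀,x) = −1/((λ + p^{r−1}) ν^r) + (1 − 1/ν) Σ_{s=r}^∞ 1/((λ + p^s) ν^s). -/

import Mathlib

noncomputable section
open scoped ENNReal

def HX (ν : ℕ) : Type := {x : ℕ → Fin ν // ∃ N, ∀ n, N ≤ n → (x n : ℕ) = 0}
instance (ν : ℕ) : DecidableEq (HX ν) := Classical.decEq _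
abbrev Hl2 (ν : ℕ) : Type := lp (fun _ : HX ν => ℝ) 2
def cube (ν : ℕ) (r : ℕ) (x : HX ν) : Set (HX ν) := {y | ∀ n, r ≤ n → y.1 n = x.1 n}
/-- Hierarchical distance `d_h(x,y) = min {r ≥ 0 : y ∈ Q^{(r)}(x)}`. -/
def dh (ν : ℕ) (x y : HX ν) : ℕ := sInf {r : ℕ | y ∈ cube ν r x}
def hdelta (ν : ℕ) (x : HX ν) : Hl2 ν := lp.single 2 x 1
def cubeSum (ν r : ℕ) (x : HX ν) (ψ : Hl2 ν) : ℝ := ∑' y : cube ν r x, ψ y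
def IsHierLap (ν : ℕ) (p : ℝ) (Δ : Hl2 ν →L[ℝ] Hl2 ν) : Prop :=
  ∀ ψ x, Δ ψ x = ∑' r : ℕ,
    (1 - p) * p ^ r * (((ν : ℝ) ^ (r + 1))⁻¹ * cubeSum ν (r + 1) x ψ - ψ x)

/-- Resolvent kernel `R_λ(x,y) = ⟨(λI − Δ_h)⁻¹ δ_y, δ_x⟩`. -/
def resolvK (ν : ℕ) (Δ : Hl2 ν →L[ℝ] Hl2 ν) (lam : ℝ) (x y : HX ν) : ℝ :=
  @inner ℝ _ _ (Ring.inverse (lam • (1 : Hl2 ν →L[ℝ] Hl2 ν) - Δ) (hdelta ν y)) (hdelta ν x)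

/-! Let `P r` average a function over the cubes of rank `r`. These are contractions of `ℓ²(X)` with
`P 0 = 1` and `P r * P s = P (max r s)`, and `λ - Δ_h = ∑ a_r P r` with `a_0 = λ + 1`,
`a_r = -(1 - p) p^(r-1)`, whose partial sums are `λ + p^N`. For such a family, the product of two
absolutely convergent series `∑ a_r P r` and `∑ b_s P s` has square partial sums
`(∑_{r ≤ N} a_r) (∑_{s ≤ N} b_s) • 1` up to terms that cancel, so the resolvent is `∑ b_s P s` with
partial sums `∑_{s ≤ N} b_s = (λ + p^N)⁻¹`. As `⟪P s δ_x, δ_x₀⟫ = ν^(-s)` if `d_h(x₀, x) ≤ s` and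
`0` otherwise, the kernel is `∑_{s ≥ d_h(x₀, x)} b_s ν^(-s)`, and an index shift gives both
formulas.
-/

open Finset Filter

theorem tsum_nat_add_eq_of_forall_lt {G : Type*} [AddCommGroup G] [TopologicalSpace G]
    [IsTopologicalAddGroup G] [T2Space G] {f : ℕ → G} {k : ℕ} (h : ∀ i < k, f i = 0) :
    ∑' i, f (i + k) = ∑' i, f i :=
  tsum_eq_tsum_of_hasSum_iff_hasSum <| by
    intro a
    rw [hasSum_nat_add_iff, sum_eq_zero fun i hi => h i (mem_range.mp hi), add_zero]

section MaxMultiplicative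

variable {𝕜 R : Type*} [NormedField 𝕜] [NormedRing R] [NormedAlgebra 𝕜 R]
  {P : ℕ → R} {a b : ℕ → 𝕜}

theorem summable_norm_smul_of_norm_le_one (hP : ∀ n, ‖P n‖ ≤ 1)
    (ha : Summable fun n => ‖a n‖) : Summable fun n => ‖a n • P n‖ :=
  ha.of_nonneg_of_le (fun _ => norm_nonneg _) fun n =>
    (norm_smul_le _ _).trans (mul_le_of_le_one_right (norm_nonneg _) (hP n))

theorem sum_range_prod_smul_max_eq_one (hP0 : P 0 = 1)
    (hab : ∀ N, (∑ n ∈ range (N + 1), a n) * (∑ n ∈ range (N + 1), b n) = 1) (N : ℕ) :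
    ∑ q ∈ range (N + 1) ×ˢ range (N + 1), (a q.1 * b q.2) • P (max q.1 q.2) = 1 := by
  induction N with
  | zero => simpa [hP0] using congrArg (· • (1 : R)) (hab 0)
  | succ N ih =>
    -- the terms added to the square all carry `P (N + 1)`, and their coefficients cancel
    have hshell : (∑ r ∈ range (N + 1), a r) * b (N + 1) + a (N + 1) * (∑ s ∈ range (N + 1), b s)
        + a (N + 1) * b (N + 1) = 0 := by
      have h := hab (N + 1)
      rw [sum_range_succ a (N + 1), sum_range_succ b (N + 1)] at h
      linear_combination h - hab N
    rw [sum_product] at ih ⊢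
    rw [sum_range_succ _ (N + 1)]
    simp only [sum_range_succ (fun s => (a _ * b s) • P (max _ s)) (N + 1), sum_add_distrib, ih]
    have hcol : ∑ r ∈ range (N + 1), (a r * b (N + 1)) • P (max r (N + 1)) =
        ((∑ r ∈ range (N + 1), a r) * b (N + 1)) • P (N + 1) := by
      rw [sum_mul, sum_smul]
      exact sum_congr rfl fun r hr => by rw [max_eq_right (mem_range.mp hr).le]
    have hrow : ∑ s ∈ range (N + 1), (a (N + 1) * b s) • P (max (N + 1) s) =
        (a (N + 1) * ∑ s ∈ range (N + 1), b s) • P (N + 1) := by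
      rw [mul_sum, sum_smul]
      exact sum_congr rfl fun s hs => by rw [max_eq_left (mem_range.mp hs).le]
    rw [hcol, hrow, max_self, ← add_smul, add_assoc, ← add_smul, ← add_assoc, hshell, zero_smul,
      add_zero]

theorem tsum_smul_mul_tsum_smul_eq_one [CompleteSpace R] (hP : ∀ n, ‖P n‖ ≤ 1) (hP0 : P 0 = 1)
    (hPmul : ∀ m n, P m * P n = P (max m n))
    (ha : Summable fun n => ‖a n‖) (hb : Summable fun n => ‖b n‖)
    (hab : ∀ N, (∑ n ∈ range (N + 1), a n) * (∑ n ∈ range (N + 1), b n) = 1) :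
    (∑' n, a n • P n) * (∑' n, b n • P n) = 1 := by
  have ha' := summable_norm_smul_of_norm_le_one hP ha
  have hb' := summable_norm_smul_of_norm_le_one hP hb
  have hsum := summable_mul_of_summable_norm ha' hb'
  rw [tsum_mul_tsum_of_summable_norm ha' hb']
  simp only [smul_mul_smul_comm, hPmul] at hsum ⊢
  have hsquares : Tendsto (fun N => range (N + 1) ×ˢ range (N + 1)) atTop atTop :=
    tendsto_atTop_finset_of_monotone (fun M N h => by gcongr) fun q => ⟨max q.1 q.2, by simp⟩
  refine tendsto_nhds_unique (hsum.hasSum.comp hsquares) ?_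
  simp only [Function.comp_def, sum_range_prod_smul_max_eq_one hP0 hab]
  exact tendsto_const_nhds

end MaxMultiplicative

section LpTwo

variable {α ι : Type*}

theorem lp.summable_sq (f : lp (fun _ : α => ℝ) 2) : Summable fun i => f i ^ 2 := by
  simpa [sq] using lp.summable_inner (𝕜 := ℝ) f f

theorem lp.norm_sq_eq_tsum_sq (f : lp (fun _ : α => ℝ) 2) : ‖f‖ ^ 2 = ∑' i, f i ^ 2 := by
  rw [← real_inner_self_eq_norm_sq, lp.inner_eq_tsum]
  simp [sq]

theorem memℓp_two_of_summable_sq {f : α → ℝ} (hf : Summable fun i => f i ^ 2) : Memℓp f 2 :=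
  memℓp_gen (by simpa using hf)

theorem lp.summable_apply_apply {T : ι → lp (fun _ : α => ℝ) 2 →L[ℝ] lp (fun _ : α => ℝ) 2}
    (hT : Summable T) (ψ : lp (fun _ : α => ℝ) 2) (x : α) : Summable fun n => T n ψ x :=
  ((lp.evalCLM ℝ (fun _ : α => ℝ) 2 x).comp (ContinuousLinearMap.apply ℝ _ ψ)).summable hT

theorem lp.tsum_apply_apply {T : ι → lp (fun _ : α => ℝ) 2 →L[ℝ] lp (fun _ : α => ℝ) 2}
    (hT : Summable T) (ψ : lp (fun _ : α => ℝ) 2) (x : α) :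
    (∑' n, T n) ψ x = ∑' n, T n ψ x :=
  ((lp.evalCLM ℝ (fun _ : α => ℝ) 2 x).comp (ContinuousLinearMap.apply ℝ _ ψ)).map_tsum hT

end LpTwo

section Coefficients

variable (p lam : ℝ)

def lamSubLapCoeff : ℕ → ℝ
  | 0 => lam + 1
  | r + 1 => -((1 - p) * p ^ r)

def resolventCoeff : ℕ → ℝ
  | 0 => (lam + 1)⁻¹
  | s + 1 => (lam + p ^ (s + 1))⁻¹ - (lam + p ^ s)⁻¹

theorem sum_range_lamSubLapCoeff (N : ℕ) :
    ∑ r ∈ range (N + 1), lamSubLapCoeff p lam r = lam + p ^ N := by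
  induction N with
  | zero => simp [lamSubLapCoeff]
  | succ N ih => rw [sum_range_succ, ih, lamSubLapCoeff]; ring

theorem sum_range_resolventCoeff (N : ℕ) :
    ∑ s ∈ range (N + 1), resolventCoeff p lam s = (lam + p ^ N)⁻¹ := by
  induction N with
  | zero => simp [resolventCoeff]
  | succ N ih => rw [sum_range_succ, ih, resolventCoeff]; ring

variable {p lam}

theorem summable_norm_lamSubLapCoeff (hp0 : 0 ≤ p) (hp1 : p < 1) :
    Summable fun r => ‖lamSubLapCoeff p lam r‖ := by
  refine (summable_nat_add_iff 1).mp ?_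
  simpa [lamSubLapCoeff, abs_of_nonneg (sub_nonneg.mpr hp1.le), abs_of_nonneg hp0] using
    (summable_geometric_of_lt_one hp0 hp1).mul_left (1 - p)

theorem resolventCoeff_nonneg (hp0 : 0 ≤ p) (hp1 : p ≤ 1) (hlam : 0 < lam) (s : ℕ) :
    0 ≤ resolventCoeff p lam s := by
  cases s with
  | zero => exact inv_nonneg.mpr (by linarith)
  | succ s =>
    rw [resolventCoeff, sub_nonneg]
    exact inv_anti₀ (by positivity) (add_le_add_right (pow_le_pow_of_le_one hp0 hp1 s.le_succ) lam)

theorem summable_norm_resolventCoeff (hp0 : 0 ≤ p) (hp1 : p ≤ 1) (hlam : 0 < lam) :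
    Summable fun s => ‖resolventCoeff p lam s‖ := by
  simp only [Real.norm_of_nonneg (resolventCoeff_nonneg hp0 hp1 hlam _)]
  refine summable_of_sum_range_le (c := lam⁻¹) (resolventCoeff_nonneg hp0 hp1 hlam) fun N => ?_
  cases N with
  | zero => simp; positivity
  | succ N =>
    rw [sum_range_resolventCoeff]
    exact inv_anti₀ hlam (le_add_of_nonneg_right (pow_nonneg hp0 _))

end Coefficients

section ResolventSeries

variable {p lam ν : ℝ}

theorem summable_one_div_mul_pow (hp0 : 0 ≤ p) (hlam : 0 < lam) (hν : 1 < ν) :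
    Summable fun s : ℕ => 1 / ((lam + p ^ s) * ν ^ s) := by
  have hν0 : 0 < ν := by linarith
  refine ((summable_geometric_of_lt_one (inv_nonneg.mpr hν0.le) (inv_lt_one_of_one_lt₀ hν)).mul_left
    lam⁻¹).of_nonneg_of_le (fun s => by positivity) fun s => ?_
  rw [one_div, mul_inv, inv_pow]
  gcongr
  exact le_add_of_nonneg_right (pow_nonneg hp0 s)

theorem resolventCoeff_succ_div_pow (s : ℕ) :
    resolventCoeff p lam (s + 1) / ν ^ (s + 1) =
      1 / ((lam + p ^ (s + 1)) * ν ^ (s + 1)) - ν⁻¹ * (1 / ((lam + p ^ s) * ν ^ s)) := by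
  simp only [resolventCoeff, one_div, mul_inv, pow_succ]
  ring

theorem tsum_resolventCoeff_succ_add_div_pow (hp0 : 0 ≤ p) (hlam : 0 < lam) (hν : 1 < ν)
    (m : ℕ) :
    ∑' s, resolventCoeff p lam (m + 1 + s) / ν ^ (m + 1 + s) =
      -(1 / ((lam + p ^ m) * ν ^ (m + 1))) +
        (1 - ν⁻¹) * ∑' s, 1 / ((lam + p ^ (m + 1 + s)) * ν ^ (m + 1 + s)) := by
  set F : ℕ → ℝ := fun s => 1 / ((lam + p ^ s) * ν ^ s) with hF
  have hFs (k : ℕ) : Summable fun s => F (k + s) := by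
    simpa only [add_comm k] using
      (summable_nat_add_iff k).mpr (summable_one_div_mul_pow hp0 hlam hν)
  have hhead : ∑' s, F (m + s) = F m + ∑' s, F (m + 1 + s) := by
    rw [(hFs m).tsum_eq_zero_add]
    simp only [add_zero, add_assoc, add_comm 1]
  have hlast : 1 / ((lam + p ^ m) * ν ^ (m + 1)) = ν⁻¹ * F m := by
    simp only [hF, one_div, mul_inv, pow_succ]
    ring
  calc ∑' s, resolventCoeff p lam (m + 1 + s) / ν ^ (m + 1 + s)
      = ∑' s, (F (m + 1 + s) - ν⁻¹ * F (m + s)) := by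
        refine tsum_congr fun s => ?_
        rw [show m + 1 + s = m + s + 1 by omega, resolventCoeff_succ_div_pow]
    _ = ∑' s, F (m + 1 + s) - ν⁻¹ * ∑' s, F (m + s) := by
        rw [(hFs (m + 1)).tsum_sub ((hFs m).mul_left _), tsum_mul_left]
    _ = _ := by rw [hhead, hlast]; ring

theorem tsum_resolventCoeff_div_pow (hp0 : 0 ≤ p) (hlam : 0 < lam) (hν : 1 < ν) :
    ∑' s, resolventCoeff p lam s / ν ^ s =
      (1 - ν⁻¹) * ∑' s, 1 / ((lam + p ^ s) * ν ^ s) := by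
  have hsum := summable_one_div_mul_pow hp0 hlam hν
  have hhead : resolventCoeff p lam 0 / ν ^ 0 = 1 / ((lam + p ^ 0) * ν ^ 0) := by
    simp [resolventCoeff]
  have hshift := (summable_nat_add_iff (f := fun s : ℕ => 1 / ((lam + p ^ s) * ν ^ s)) 1).mpr hsum
  have hsucc : Summable fun s => resolventCoeff p lam (s + 1) / ν ^ (s + 1) := by
    refine (hshift.sub (hsum.mul_left ν⁻¹)).congr fun s => ?_
    exact (resolventCoeff_succ_div_pow s).symm
  rw [tsum_eq_zero_add' (f := fun s => resolventCoeff p lam s / ν ^ s) hsucc,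
    hsum.tsum_eq_zero_add, hhead]
  simp only [add_comm _ 1]
  rw [tsum_resolventCoeff_succ_add_div_pow hp0 hlam hν 0]
  simp only [zero_add, pow_zero, pow_one, one_div, mul_inv, mul_one]
  ring

end ResolventSeries

namespace HX

variable {ν : ℕ}

theorem ext {x y : HX ν} (h : ∀ n, x.1 n = y.1 n) : x = y := Subtype.ext (funext h)

theorem pos (x : HX ν) : 0 < ν := (x.1 0).pos

def override (r : ℕ) (v : Fin r → Fin ν) (x : HX ν) : HX ν :=
  ⟨fun n => if h : n < r then v ⟨n, h⟩ else x.1 n, by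
    obtain ⟨N, hN⟩ := x.2
    exact ⟨max N r, fun n hn => by
      simp [not_lt.mpr (le_of_max_le_right hn), hN n (le_of_max_le_left hn)]⟩⟩

theorem override_injective (r : ℕ) (x : HX ν) : Function.Injective fun v => override r v x :=
  fun v w h => funext fun i => by simpa [override, i.2] using congrArg (fun y : HX ν => y.1 i) h

theorem override_mem_cube (r : ℕ) (v : Fin r → Fin ν) (x : HX ν) : override r v x ∈ cube ν r x :=
  fun n hn => by simp [override, not_lt.mpr hn]

theorem override_eq_of_mem_cube {r : ℕ} {x y : HX ν} (hy : y ∈ cube ν r x) :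
    override r (fun i => y.1 i) x = y :=
  HX.ext fun n => by
    by_cases hn : n < r
    · simp [override, hn]
    · simp [override, hn, hy n (not_lt.mp hn)]

theorem mem_cube_self (r : ℕ) (x : HX ν) : x ∈ cube ν r x := fun _ _ => rfl

theorem mem_cube_comm {r : ℕ} {x y : HX ν} : y ∈ cube ν r x ↔ x ∈ cube ν r y :=
  ⟨fun h n hn => (h n hn).symm, fun h n hn => (h n hn).symm⟩

theorem mem_cube_trans {r : ℕ} {x y z : HX ν} (hy : y ∈ cube ν r x) (hz : z ∈ cube ν r y) :
    z ∈ cube ν r x :=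
  fun n hn => (hz n hn).trans (hy n hn)

theorem cube_mono {r s : ℕ} (h : r ≤ s) (x : HX ν) : cube ν r x ⊆ cube ν s x :=
  fun _ hy n hn => hy n (h.trans hn)

theorem exists_mem_cube (x y : HX ν) : ∃ r, y ∈ cube ν r x := by
  obtain ⟨N, hN⟩ := x.2
  obtain ⟨M, hM⟩ := y.2
  exact ⟨max N M, fun n hn => Fin.ext ((hM n (le_of_max_le_right hn)).trans
    (hN n (le_of_max_le_left hn)).symm)⟩

theorem mem_cube_iff_dh_le {r : ℕ} {x y : HX ν} : y ∈ cube ν r x ↔ dh ν x y ≤ r :=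
  ⟨fun h => Nat.sInf_le h, fun h => cube_mono h x (Nat.sInf_mem (exists_mem_cube x y))⟩

theorem dh_self (x : HX ν) : dh ν x x = 0 :=
  Nat.le_zero.mp (mem_cube_iff_dh_le.mp (mem_cube_self 0 x))

theorem dh_pos {x y : HX ν} (h : x ≠ y) : 0 < dh ν x y := by
  refine Nat.pos_of_ne_zero fun h0 => h ?_
  have hy := mem_cube_iff_dh_le.mpr h0.le
  exact HX.ext fun n => (hy n n.zero_le).symm

def cubeFinset (r : ℕ) (x : HX ν) : Finset (HX ν) :=
  univ.map ⟨fun v => override r v x, override_injective r x⟩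

theorem mem_cubeFinset {r : ℕ} {x y : HX ν} : y ∈ cubeFinset r x ↔ y ∈ cube ν r x := by
  refine ⟨fun hy => ?_, fun h =>
    mem_map.mpr ⟨fun i => y.1 i, mem_univ _, override_eq_of_mem_cube h⟩⟩
  obtain ⟨v, -, rfl⟩ := mem_map.mp hy
  exact override_mem_cube r v x

theorem card_cubeFinset (r : ℕ) (x : HX ν) : #(cubeFinset r x) = ν ^ r := by
  simp [cubeFinset]

theorem cubeFinset_eq_of_mem_cube {r : ℕ} {x y : HX ν} (h : y ∈ cube ν r x) :
    cubeFinset r y = cubeFinset r x :=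
  Finset.ext fun z => by
    simp only [mem_cubeFinset]
    exact ⟨mem_cube_trans h, fun hz => mem_cube_trans (mem_cube_comm.mp h) hz⟩

theorem cubeSum_eq_sum (r : ℕ) (x : HX ν) (ψ : Hl2 ν) :
    cubeSum ν r x ψ = ∑ y ∈ cubeFinset r x, ψ y := by
  have hcube : cube ν r x = ↑(cubeFinset r x) := Set.ext fun _ => mem_cubeFinset.symm
  rw [cubeSum, hcube, Finset.tsum_subtype']

def cubeAvg (r : ℕ) (f : HX ν → ℝ) (x : HX ν) : ℝ :=
  ((ν : ℝ) ^ r)⁻¹ * ∑ y ∈ cubeFinset r x, f y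

theorem cubeAvg_eq_of_mem_cube {r : ℕ} (f : HX ν → ℝ) {x y : HX ν} (h : y ∈ cube ν r x) :
    cubeAvg r f y = cubeAvg r f x := by
  rw [cubeAvg, cubeFinset_eq_of_mem_cube h, cubeAvg]

theorem pow_inv_mul_card_cubeFinset (r : ℕ) (x : HX ν) :
    ((ν : ℝ) ^ r)⁻¹ * #(cubeFinset r x) = 1 := by
  rw [card_cubeFinset, Nat.cast_pow]
  exact inv_mul_cancel₀ (pow_ne_zero _ (Nat.cast_ne_zero.mpr x.pos.ne'))

theorem cubeAvg_const {r : ℕ} {x : HX ν} (c : ℝ) : cubeAvg r (fun _ => c) x = c := by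
  rw [cubeAvg, sum_const, nsmul_eq_mul, ← mul_assoc, pow_inv_mul_card_cubeFinset, one_mul]

theorem cubeAvg_zero (f : HX ν → ℝ) : cubeAvg 0 f = f := by
  funext x
  have hx : cubeFinset 0 x = {x} := eq_singleton_iff_unique_mem.mpr
    ⟨mem_cubeFinset.mpr (mem_cube_self 0 x),
      fun y hy => HX.ext fun n => mem_cubeFinset.mp hy n n.zero_le⟩
  simp [cubeAvg, hx]

theorem cubeAvg_cubeAvg_of_le {r s : ℕ} (h : r ≤ s) (f : HX ν → ℝ) :
    cubeAvg r (cubeAvg s f) = cubeAvg s f := by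
  funext x
  rw [cubeAvg, sum_congr rfl fun y hy =>
    cubeAvg_eq_of_mem_cube f (cube_mono h x (mem_cubeFinset.mp hy))]
  exact cubeAvg_const _

theorem cubeAvg_cubeAvg_of_ge {r s : ℕ} (h : s ≤ r) (f : HX ν → ℝ) :
    cubeAvg r (cubeAvg s f) = cubeAvg r f := by
  funext x
  have hswap : ∑ y ∈ cubeFinset r x, ∑ z ∈ cubeFinset s y, f z =
      ∑ z ∈ cubeFinset r x, ∑ _y ∈ cubeFinset s z, f z := by
    refine sum_comm' fun y z => ?_
    simp only [mem_cubeFinset]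
    exact ⟨fun ⟨hy, hz⟩ => ⟨mem_cube_comm.mp hz, mem_cube_trans hy (cube_mono h y hz)⟩,
      fun ⟨hy, hz⟩ => ⟨mem_cube_trans hz (cube_mono h z hy), mem_cube_comm.mp hy⟩⟩
  simp only [cubeAvg, ← mul_sum, hswap, sum_const, nsmul_eq_mul]
  congr 1
  rw [mul_sum]
  exact sum_congr rfl fun z _ => by rw [← mul_assoc, pow_inv_mul_card_cubeFinset, one_mul]

theorem cubeAvg_cubeAvg (r s : ℕ) (f : HX ν → ℝ) :
    cubeAvg r (cubeAvg s f) = cubeAvg (max r s) f := by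
  rcases le_total r s with h | h
  · rw [cubeAvg_cubeAvg_of_le h, max_eq_right h]
  · rw [cubeAvg_cubeAvg_of_ge h, max_eq_left h]

theorem sq_cubeAvg_le (r : ℕ) (f : HX ν → ℝ) (x : HX ν) :
    cubeAvg r f x ^ 2 ≤ cubeAvg r (fun y => f y ^ 2) x := by
  have hc : (0 : ℝ) < (ν : ℝ) ^ r := pow_pos (Nat.cast_pos.mpr x.pos) r
  have hcs := sq_sum_le_card_mul_sum_sq (s := cubeFinset r x) (f := f)
  rw [card_cubeFinset, Nat.cast_pow] at hcs
  calc cubeAvg r f x ^ 2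
        = ((ν : ℝ) ^ r)⁻¹ * (((ν : ℝ) ^ r)⁻¹ * (∑ y ∈ cubeFinset r x, f y) ^ 2) := by
        rw [cubeAvg]; ring
    _ ≤ ((ν : ℝ) ^ r)⁻¹ * (((ν : ℝ) ^ r)⁻¹ * ((ν : ℝ) ^ r * ∑ y ∈ cubeFinset r x, f y ^ 2)) := by
        gcongr
    _ = cubeAvg r (fun y => f y ^ 2) x := by rw [cubeAvg, inv_mul_cancel_left₀ hc.ne']

theorem hasSum_cubeAvg (r : ℕ) {f : HX ν → ℝ} {a : ℝ} (hf : 0 ≤ f) (h : HasSum f a) :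
    HasSum (cubeAvg r f) a := by
  set G : HX ν × HX ν → ℝ := fun q => if q.2 ∈ cubeFinset r q.1 then ((ν : ℝ) ^ r)⁻¹ * f q.1 else 0
  have hG : 0 ≤ G := fun q => by
    simp only [G]; split_ifs
    · exact mul_nonneg (by positivity) (hf _)
    · exact le_rfl
  have hrow : ∀ y, HasSum (fun x => G (y, x)) (f y) := fun y => by
    have hsum : ∑ x ∈ cubeFinset r y, G (y, x) = f y := by
      simp only [G, sum_ite_mem, inter_self, sum_const, nsmul_eq_mul]
      rw [← mul_assoc, mul_comm _ ((ν : ℝ) ^ r)⁻¹, pow_inv_mul_card_cubeFinset, one_mul]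
    exact hsum ▸ hasSum_sum_of_ne_finset_zero fun x hx => if_neg hx
  have hcol : ∀ x, HasSum (fun y => G (y, x)) (cubeAvg r f x) := fun x => by
    have hsum : ∑ y ∈ cubeFinset r x, G (y, x) = cubeAvg r f x := by
      rw [cubeAvg, mul_sum]
      exact sum_congr rfl fun y hy =>
        if_pos (mem_cubeFinset.mpr (mem_cube_comm.mp (mem_cubeFinset.mp hy)))
    exact hsum ▸ hasSum_sum_of_ne_finset_zero fun y hy =>
      if_neg fun hx => hy (mem_cubeFinset.mpr (mem_cube_comm.mp (mem_cubeFinset.mp hx)))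
  have hGs : Summable G := (summable_prod_of_nonneg hG).mpr
    ⟨fun y => (hrow y).summable, by simpa only [(hrow _).tsum_eq] using h.summable⟩
  have hGa : HasSum G a := by
    convert hGs.hasSum
    exact h.unique (hGs.hasSum.prod_fiberwise hrow)
  exact ((Equiv.prodComm _ _).hasSum_iff.mpr hGa).prod_fiberwise hcol

theorem summable_sq_cubeAvg (r : ℕ) (ψ : Hl2 ν) : Summable fun x => cubeAvg r ψ x ^ 2 :=
  (hasSum_cubeAvg r (fun x => sq_nonneg (ψ x)) (lp.summable_sq ψ).hasSum).summable.of_nonneg_of_le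
    (fun _ => sq_nonneg _) (sq_cubeAvg_le r ψ)

theorem tsum_sq_cubeAvg_le (r : ℕ) (ψ : Hl2 ν) : ∑' x, cubeAvg r ψ x ^ 2 ≤ ∑' x, ψ x ^ 2 := by
  have hsq := hasSum_cubeAvg r (fun x => sq_nonneg (ψ x)) (lp.summable_sq ψ).hasSum
  exact hsq.tsum_eq ▸ (summable_sq_cubeAvg r ψ).tsum_le_tsum (sq_cubeAvg_le r ψ) hsq.summable

theorem cubeAvg_add (r : ℕ) (f g : HX ν → ℝ) : cubeAvg r (f + g) = cubeAvg r f + cubeAvg r g := by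
  funext x
  simp [cubeAvg, sum_add_distrib, mul_add]

theorem cubeAvg_smul (r : ℕ) (c : ℝ) (f : HX ν → ℝ) : cubeAvg r (c • f) = c • cubeAvg r f := by
  funext x
  simp [cubeAvg, ← mul_sum, mul_left_comm]

variable (ν) in
def cubeAvgCLM (r : ℕ) : Hl2 ν →L[ℝ] Hl2 ν :=
  LinearMap.mkContinuous
    { toFun := fun ψ => ⟨cubeAvg r ψ, memℓp_two_of_summable_sq (summable_sq_cubeAvg r ψ)⟩
      map_add' := fun ψ φ => lp.ext (cubeAvg_add r ψ φ)
      map_smul' := fun c ψ => lp.ext (cubeAvg_smul r c ψ) }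
    1 fun ψ => by
      rw [one_mul, ← pow_le_pow_iff_left₀ (norm_nonneg _) (norm_nonneg _) two_ne_zero,
        lp.norm_sq_eq_tsum_sq, lp.norm_sq_eq_tsum_sq]
      exact tsum_sq_cubeAvg_le r ψ

theorem cubeAvgCLM_apply (r : ℕ) (ψ : Hl2 ν) (x : HX ν) : cubeAvgCLM ν r ψ x = cubeAvg r ψ x :=
  rfl

theorem norm_cubeAvgCLM_le (r : ℕ) : ‖cubeAvgCLM ν r‖ ≤ 1 :=
  LinearMap.mkContinuous_norm_le _ zero_le_one _

theorem cubeAvgCLM_zero : cubeAvgCLM ν 0 = 1 :=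
  ContinuousLinearMap.ext fun ψ => lp.ext (cubeAvg_zero ψ)

theorem cubeAvgCLM_mul (r s : ℕ) : cubeAvgCLM ν r * cubeAvgCLM ν s = cubeAvgCLM ν (max r s) :=
  ContinuousLinearMap.ext fun ψ => lp.ext (cubeAvg_cubeAvg r s ψ)

variable {p lam : ℝ} {Δ : Hl2 ν →L[ℝ] Hl2 ν}

theorem cubeAvg_eq_cubeSum (r : ℕ) (ψ : Hl2 ν) (x : HX ν) :
    cubeAvg r ψ x = ((ν : ℝ) ^ r)⁻¹ * cubeSum ν r x ψ := by
  rw [cubeAvg, cubeSum_eq_sum]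

theorem summable_smul_cubeAvgCLM {a : ℕ → ℝ} (ha : Summable fun n => ‖a n‖) :
    Summable fun n => a n • cubeAvgCLM ν n :=
  (summable_norm_smul_of_norm_le_one norm_cubeAvgCLM_le ha).of_norm

theorem lamSub_eq_tsum (hp0 : 0 ≤ p) (hp1 : p < 1) (hΔ : IsHierLap ν p Δ) :
    lam • 1 - Δ = ∑' r, lamSubLapCoeff p lam r • cubeAvgCLM ν r := by
  have hsum := summable_smul_cubeAvgCLM (ν := ν) (summable_norm_lamSubLapCoeff (lam := lam) hp0 hp1)
  have hgeom : HasSum (fun r : ℕ => (1 - p) * p ^ r) 1 := by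
    simpa [mul_inv_cancel₀ (sub_ne_zero.mpr hp1.ne')] using
      (hasSum_geometric_of_lt_one hp0 hp1).mul_left (1 - p)
  ext ψ x
  have hterms := lp.summable_apply_apply hsum ψ x
  have havg : Summable fun r : ℕ => (1 - p) * p ^ r * cubeAvg (r + 1) ψ x := by
    refine ((summable_nat_add_iff 1).mpr hterms).neg.congr fun r => ?_
    simp only [lamSubLapCoeff, neg_smul, neg_apply, lp.coeFn_neg, Pi.neg_apply, neg_neg,
      smul_apply, lp.coeFn_smul, Pi.smul_apply, smul_eq_mul, cubeAvgCLM_apply]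
  rw [lp.tsum_apply_apply hsum, hterms.tsum_eq_zero_add]
  simp only [sub_apply, smul_apply, one_apply_eq_self, lp.coeFn_sub, lp.coeFn_smul, Pi.sub_apply,
    Pi.smul_apply, smul_eq_mul, hΔ ψ x, ← cubeAvg_eq_cubeSum, mul_sub, lamSubLapCoeff,
    cubeAvgCLM_apply, cubeAvg_zero, neg_mul, tsum_neg]
  rw [havg.tsum_sub (hgeom.summable.mul_right _), tsum_mul_right, hgeom.tsum_eq]
  ring

theorem ring_inverse_lamSub (hp0 : 0 ≤ p) (hp1 : p < 1) (hlam : 0 < lam) (hΔ : IsHierLap ν p Δ) :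
    Ring.inverse (lam • 1 - Δ) = ∑' s, resolventCoeff p lam s • cubeAvgCLM ν s := by
  have ha := summable_norm_lamSubLapCoeff (lam := lam) hp0 hp1
  have hb := summable_norm_resolventCoeff hp0 hp1.le hlam
  have hab (N : ℕ) : (∑ r ∈ range (N + 1), lamSubLapCoeff p lam r) *
      (∑ s ∈ range (N + 1), resolventCoeff p lam s) = 1 := by
    rw [sum_range_lamSubLapCoeff, sum_range_resolventCoeff, mul_inv_cancel₀ (by positivity)]
  let u : (Hl2 ν →L[ℝ] Hl2 ν)ˣ :=
    { val := ∑' r, lamSubLapCoeff p lam r • cubeAvgCLM ν r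
      inv := ∑' s, resolventCoeff p lam s • cubeAvgCLM ν s
      val_inv := tsum_smul_mul_tsum_smul_eq_one norm_cubeAvgCLM_le cubeAvgCLM_zero cubeAvgCLM_mul
        ha hb hab
      inv_val := tsum_smul_mul_tsum_smul_eq_one norm_cubeAvgCLM_le cubeAvgCLM_zero cubeAvgCLM_mul
        hb ha fun N => (mul_comm _ _).trans (hab N) }
  rw [lamSub_eq_tsum hp0 hp1 hΔ]
  exact Ring.inverse_unit u

theorem cubeAvg_single (r : ℕ) (x₀ x : HX ν) :
    cubeAvg r (Pi.single x 1) x₀ = if dh ν x₀ x ≤ r then ((ν : ℝ) ^ r)⁻¹ else 0 := by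
  simp only [cubeAvg, sum_pi_single', mem_cubeFinset, mem_cube_iff_dh_le]
  split_ifs <;> simp

theorem resolvK_eq_tsum (hp0 : 0 ≤ p) (hp1 : p < 1) (hlam : 0 < lam) (hΔ : IsHierLap ν p Δ)
    (x₀ x : HX ν) :
    resolvK ν Δ lam x₀ x =
      ∑' s, resolventCoeff p lam (dh ν x₀ x + s) / (ν : ℝ) ^ (dh ν x₀ x + s) := by
  have hsum := summable_smul_cubeAvgCLM (ν := ν) (summable_norm_resolventCoeff hp0 hp1.le hlam)
  rw [resolvK, ring_inverse_lamSub hp0 hp1 hlam hΔ, hdelta, hdelta, lp.inner_single_right]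
  have hterm (s : ℕ) : (resolventCoeff p lam s • cubeAvgCLM ν s) (lp.single 2 x 1) x₀ =
      if dh ν x₀ x ≤ s then resolventCoeff p lam s / (ν : ℝ) ^ s else 0 := by
    simp only [smul_apply, lp.coeFn_smul, Pi.smul_apply, smul_eq_mul, cubeAvgCLM_apply,
      lp.coeFn_single, cubeAvg_single, mul_ite, mul_zero, div_eq_mul_inv]
  simp only [RCLike.inner_apply, conj_trivial, one_mul, lp.tsum_apply_apply hsum, hterm]
  rw [← tsum_nat_add_eq_of_forall_lt (k := dh ν x₀ x) fun i hi => if_neg (by omega)]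
  exact tsum_congr fun s => by rw [if_pos (by omega), add_comm]

end HX

theorem stmt7 (ν : ℕ) (hν : 2 ≤ ν) (p : ℝ) (hp0 : 0 < p) (hp1 : p < 1)
    (Δ : Hl2 ν →L[ℝ] Hl2 ν) (hΔ : IsHierLap ν p Δ) :
    ∀ lam : ℝ, 0 < lam →
      (∀ x : HX ν,
        resolvK ν Δ lam x x =
          (1 - (ν : ℝ)⁻¹) * ∑' s : ℕ, 1 / ((lam + p ^ s) * (ν : ℝ) ^ s)) ∧
      (∀ x₀ x : HX ν, x₀ ≠ x →
        resolvK ν Δ lam x₀ x =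
          -(1 / ((lam + p ^ (dh ν x₀ x - 1)) * (ν : ℝ) ^ dh ν x₀ x)) +
          (1 - (ν : ℝ)⁻¹) *
            ∑' s : ℕ, 1 / ((lam + p ^ (dh ν x₀ x + s)) * (ν : ℝ) ^ (dh ν x₀ x + s))) := by
  intro lam hlam
  have hν1 : 1 < (ν : ℝ) := by exact_mod_cast hν
  refine ⟨fun x => ?_, fun x₀ x hne => ?_⟩
  · rw [HX.resolvK_eq_tsum hp0.le hp1 hlam hΔ, HX.dh_self]
    simpa only [zero_add] using tsum_resolventCoeff_div_pow hp0.le hlam hν1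
  · obtain ⟨m, hm⟩ := Nat.exists_eq_add_one_of_ne_zero (HX.dh_pos hne).ne'
    rw [HX.resolvK_eq_tsum hp0.le hp1 hlam hΔ, hm, Nat.add_sub_cancel]
    exact tsum_resolventCoeff_succ_add_div_pow hp0.le hlam hν1 m
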